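/- arXiv:2205.01488 — 3 statements merged into one kernel-verified Lean document; each statement's English description precedes it below -/
import Mathlib

section
/- If 0 ≤ α ≤ 1, β > 1/2, αβ + 1/(2β) ≤ 1 and α < 1/(2β), then for all nonzero real b, -(2αβ - 2β - 1)(2αβ - 1)(2β - 1)b⁴ < 0; consequently |R(ib)| < 1 for all b ≠ 0, where R is the SSPMPRK2 stability function. -/
/-! On the imaginary axis `z = ib` the squared moduli of the denominator and numerator of `R`
differ by `(2αβ - 2β - 1)(2αβ - 1)(2β - 1) b⁴`. For `β > 1/2` and `2αβ < 1` the three factors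
have signs `-, -, +`, so this difference is positive for `b ≠ 0`, which gives `|R(ib)| < 1`. -/

open Complex

theorem Complex.norm_div_lt_one_of_normSq_lt {z w : ℂ} (h : normSq z < normSq w) :
    ‖z / w‖ < 1 := by
  have hw : 0 < ‖w‖ := norm_pos_iff.mpr (normSq_pos.mp ((normSq_nonneg z).trans_lt h))
  rw [norm_div, div_lt_one hw]
  rw [← Complex.sq_norm, ← Complex.sq_norm] at h
  exact lt_of_pow_lt_pow_left₀ 2 (norm_nonneg w) h

def sspmprk2Num (α β : ℝ) (z : ℂ) : ℂ :=
  -2 + (2 * α * β ^ 2 - 2 * α * β + 1) * z ^ 2 - 2 * β * (α - 1) * z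

def sspmprk2Den (α β : ℝ) (z : ℂ) : ℂ :=
  2 * (1 + ((α : ℂ) * β - 1) * z) * (β * z - 1)

theorem normSq_sspmprk2Den_sub_normSq_sspmprk2Num (α β b : ℝ) :
    normSq (sspmprk2Den α β (I * b)) - normSq (sspmprk2Num α β (I * b)) =
      (2 * α * β - 2 * β - 1) * (2 * α * β - 1) * (2 * β - 1) * b ^ 4 := by
  simp only [sspmprk2Den, sspmprk2Num, normSq_apply, pow_two, mul_re, mul_im, add_re,
    add_im, sub_re, sub_im, neg_re, neg_im, one_re, one_im, re_ofNat, im_ofNat, ofReal_re, ofReal_im,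
    I_re, I_im]
  ring

theorem sspmprk2_gap_coeff_pos {α β : ℝ} (hβ : 1 / 2 < β) (hα : α < 1 / (2 * β)) :
    0 < (2 * α * β - 2 * β - 1) * (2 * α * β - 1) * (2 * β - 1) := by
  have hαβ : 2 * α * β < 1 := by
    have := (lt_div_iff₀ (by linarith : (0 : ℝ) < 2 * β)).mp hα
    linarith
  have h1 : 2 * α * β - 2 * β - 1 < 0 := by nlinarith
  exact mul_pos (mul_pos_of_neg_of_neg h1 (by linarith)) (by linarith)

theorem sspmprk2_modulus_lt_one_on_imaginary_axis_general
    (α β : ℝ) (hβ : 1 / 2 < β)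
    (hα : α < 1 / (2 * β))
    (R : ℂ → ℂ)
    (hR : ∀ z : ℂ, R z =
      (-2 + (2 * α * β ^ 2 - 2 * α * β + 1) * z ^ 2 - 2 * β * (α - 1) * z) /
        (2 * (1 + ((α : ℂ) * β - 1) * z) * (β * z - 1))) :
    ∀ b : ℝ, b ≠ 0 →
      -(2 * α * β - 2 * β - 1) * (2 * α * β - 1) * (2 * β - 1) * b ^ 4 < 0 ∧
      ‖R (Complex.I * b)‖ < 1 := by
  intro b hb
  have hgap := mul_pos (sspmprk2_gap_coeff_pos hβ hα) (by positivity : 0 < b ^ 4)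
  refine ⟨by linarith, ?_⟩
  rw [hR]
  apply Complex.norm_div_lt_one_of_normSq_lt
  have := normSq_sspmprk2Den_sub_normSq_sspmprk2Num α β b
  simp only [sspmprk2Den, sspmprk2Num] at this
  linarith

theorem sspmprk2_modulus_lt_one_on_imaginary_axis
    (α β : ℝ) (hα0 : 0 ≤ α) (hα1 : α ≤ 1) (hβ : 1 / 2 < β)
    (hcond : α * β + 1 / (2 * β) ≤ 1) (hα : α < 1 / (2 * β))
    (R : ℂ → ℂ)
    (hR : ∀ z : ℂ, R z =
      (-2 + (2 * α * β ^ 2 - 2 * α * β + 1) * z ^ 2 - 2 * β * (α - 1) * z) /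
        (2 * (1 + ((α : ℂ) * β - 1) * z) * (β * z - 1))) :
    ∀ b : ℝ, b ≠ 0 →
      -(2 * α * β - 2 * β - 1) * (2 * α * β - 1) * (2 * β - 1) * b ^ 4 < 0 ∧
      ‖R (Complex.I * b)‖ < 1 :=
  sspmprk2_modulus_lt_one_on_imaginary_axis_general α β hβ hα R hR
end

section
/- If α = 1/(2β) (with β ≥ 1/2, 0 ≤ α ≤ 1) or (α,β) = (0, 1/2), then |R(ib)| = 1 for all real b, where R is the SSPMPRK2 stability function. -/
/-!
On the imaginary axis the squared moduli of numerator and denominator of `R` differ by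
`c (2αβ - 1)(2β - 1) b⁴` for a polynomial `c` in `α, β`, while the denominator never vanishes
there (its two linear factors have real parts `1` and `-1`). Both admissible cases kill the
factor `(2αβ - 1)(2β - 1)`, so `|R(ib)| = 1`.
-/

open Complex

namespace SSPMPRK2

def numer (α β : ℝ) (z : ℂ) : ℂ :=
  -2 + (2 * α * β ^ 2 - 2 * α * β + 1) * z ^ 2 - 2 * β * (α - 1) * z

def denom (α β : ℝ) (z : ℂ) : ℂ :=
  2 * (1 + ((α : ℂ) * β - 1) * z) * (β * z - 1)

theorem normSq_numer_sub_normSq_denom (α β b : ℝ) :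
    normSq (numer α β (I * b)) - normSq (denom α β (I * b)) =
      -(2 * α * β - 2 * β - 1) * (2 * α * β - 1) * (2 * β - 1) * b ^ 4 := by
  simp only [numer, denom, normSq_apply, add_re, add_im, sub_re, sub_im, mul_re, mul_im, one_re,
    one_im, I_re, I_im, ofReal_re, ofReal_im, neg_re, neg_im, re_ofNat, im_ofNat, pow_two]
  ring

theorem one_add_ofReal_mul_I_mul_ne_zero (c b : ℝ) : (1 : ℂ) + c * (I * b) ≠ 0 := by
  intro h
  simpa using congrArg re h

theorem denom_ne_zero (α β b : ℝ) : denom α β (I * b) ≠ 0 := by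
  have hleft : (1 : ℂ) + ((α : ℂ) * β - 1) * (I * b) ≠ 0 := by
    exact_mod_cast one_add_ofReal_mul_I_mul_ne_zero (α * β - 1) b
  have hright : (β : ℂ) * (I * b) - 1 ≠ 0 := by
    rw [← neg_ne_zero, neg_sub, sub_eq_add_neg, ← neg_mul, ← ofReal_neg]
    exact one_add_ofReal_mul_I_mul_ne_zero (-β) b
  exact mul_ne_zero (mul_ne_zero two_ne_zero hleft) hright

theorem norm_numer_div_denom_eq_one {α β : ℝ} (h : (2 * α * β - 1) * (2 * β - 1) = 0) (b : ℝ) :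
    ‖numer α β (I * b) / denom α β (I * b)‖ = 1 := by
  have hnormSq : normSq (numer α β (I * b)) = normSq (denom α β (I * b)) := by
    linear_combination
      normSq_numer_sub_normSq_denom α β b + (-(2 * α * β - 2 * β - 1) * b ^ 4) * h
  have hnorm : ‖numer α β (I * b)‖ = ‖denom α β (I * b)‖ := by
    rw [norm_def, norm_def, hnormSq]
  rw [norm_div, hnorm, div_self (norm_ne_zero_iff.mpr (denom_ne_zero α β b))]

theorem critical_factor_eq_zero {α β : ℝ}
    (hcase : (α = 1 / (2 * β) ∧ 1 / 2 ≤ β) ∨ (α = 0 ∧ β = 1 / 2)) :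
    (2 * α * β - 1) * (2 * β - 1) = 0 := by
  rcases hcase with ⟨rfl, hβ⟩ | ⟨-, rfl⟩
  · have : β ≠ 0 := by positivity
    field_simp
    ring
  · norm_num

end SSPMPRK2

theorem sspmprk2_modulus_eq_one_on_imaginary_axis_general
    (α β : ℝ)
    (hcase : (α = 1 / (2 * β) ∧ 1 / 2 ≤ β) ∨ (α = 0 ∧ β = 1 / 2))
    (R : ℂ → ℂ)
    (hR : ∀ z : ℂ, R z =
      (-2 + (2 * α * β ^ 2 - 2 * α * β + 1) * z ^ 2 - 2 * β * (α - 1) * z) /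
        (2 * (1 + ((α : ℂ) * β - 1) * z) * (β * z - 1))) :
    ∀ b : ℝ, ‖R (Complex.I * b)‖ = 1 := by
  intro b
  rw [hR]
  exact SSPMPRK2.norm_numer_div_denom_eq_one (SSPMPRK2.critical_factor_eq_zero hcase) b

theorem sspmprk2_modulus_eq_one_on_imaginary_axis
    (α β : ℝ) (hα0 : 0 ≤ α) (hα1 : α ≤ 1) (hβ : 0 < β)
    (hcond : α * β + 1 / (2 * β) ≤ 1)
    (hcase : (α = 1 / (2 * β) ∧ 1 / 2 ≤ β) ∨ (α = 0 ∧ β = 1 / 2))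
    (R : ℂ → ℂ)
    (hR : ∀ z : ℂ, R z =
      (-2 + (2 * α * β ^ 2 - 2 * α * β + 1) * z ^ 2 - 2 * β * (α - 1) * z) /
        (2 * (1 + ((α : ℂ) * β - 1) * z) * (β * z - 1))) :
    ∀ b : ℝ, ‖R (Complex.I * b)‖ = 1 :=
  sspmprk2_modulus_eq_one_on_imaginary_axis_general α β hcase R hR
end

section
/- Let g : ℝ^N → ℝ^N be defined by g(y) = M(y)⁻¹·c(y) where the matrices/vectors arise from the SSPMPRK2 scheme for the linear test problem, specifically y⁽¹⁾(y) = (I - βΔtA)⁻¹y and y^{n+1} determined by (I - ΔtA·D(y))y^{n+1} = (1-α)y + αy⁽¹⁾(y) with D(y) = diag(β₂₀y + β₂₁y⁽¹⁾(y))·diag(y⁽¹⁾(y))^{-s}·diag(y)^{s-1}. Then the Jacobian of g at a positive steady state y* (A y* = 0) is Dg(y*) = (I - (1-αβ)ΔtA)⁻¹[(1-α)I + ΔtA((s-1)(1-αβ) + β₂₀) + (αI + ΔtA(-s(1-αβ) + β₂₁))(I - βΔtA)⁻¹]. -/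
/-!
At a positive steady state `y*` the first stage and the Patankar weights are stationary:
`(I - βΔtA)⁻¹ y* = y*` and `D(y*) = (β₂₀ + β₂₁) I = (1 - αβ) I`, so the implicit matrix at `y*`
is `C = I - (1 - αβ)ΔtA`, invertible because the spectrum of `A` lies in the closed left
half-plane. Differentiating `g = M⁻¹ c` gives `Dg = C⁻¹ (Dc - DM · C⁻¹ c(y*))` with
`C⁻¹ c(y*) = y*` and `-DM(h) y* = ΔtA (DD(h) y*)`. The weight `(a x + b u) u^(-s) x^(s-1)` is
homogeneous of degree `0`, so its differential at `x = u = y*ᵢ` is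
`((a + (s - 1)(a + b)) dx + (b - s(a + b)) du) / y*ᵢ`, and the factor `1 / y*ᵢ` cancels against
the multiplication by `y*`.
-/

open Matrix

attribute [local instance] Matrix.linftyOpNormedAddCommGroup Matrix.linftyOpNormedRing
  Matrix.linftyOpNormedSpace Matrix.linftyOpNormedAlgebra

namespace Matrix

theorem ofReal_mem_spectrum_map {n : Type*} [Fintype n] [DecidableEq n]
    {A : Matrix n n ℝ} {r : ℝ} (hr : r ∈ spectrum ℝ A) :
    (r : ℂ) ∈ spectrum ℂ (A.map Complex.ofReal) := by
  rw [mem_spectrum_iff_isRoot_charpoly] at hr ⊢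
  have := hr.map (f := Complex.ofRealHom)
  rwa [← charpoly_map] at this

theorem isUnit_one_sub_smul_of_spectrum_re_nonpos {n : Type*} [Fintype n] [DecidableEq n]
    {A : Matrix n n ℝ} (hA : ∀ μ ∈ spectrum ℂ (A.map Complex.ofReal), μ.re ≤ 0)
    {c : ℝ} (hc : 0 < c) : IsUnit (1 - c • A) := by
  have hinv : c⁻¹ ∉ spectrum ℝ A := fun h => by
    have := hA _ (ofReal_mem_spectrum_map h)
    rw [Complex.ofReal_re] at this
    exact this.not_gt (inv_pos.2 hc)
  have hfac : 1 - c • A = c • (algebraMap ℝ _ c⁻¹ - A) := by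
    rw [Algebra.algebraMap_eq_smul_one, smul_sub, smul_smul, mul_inv_cancel₀ hc.ne', one_smul]
  rw [hfac]
  exact (spectrum.notMem_iff.1 hinv).smul (Units.mk0 c hc.ne')

section Steady

variable {n α : Type*} [Fintype n] [DecidableEq n] [CommRing α]

theorem one_sub_smul_mulVec_of_mulVec_eq_zero {A : Matrix n n α} {y : n → α} (c : α)
    (hy : A *ᵥ y = 0) : (1 - c • A) *ᵥ y = y := by
  rw [sub_mulVec, one_mulVec, smul_mulVec, hy, smul_zero, sub_zero]

theorem inv_mulVec_eq_self {M : Matrix n n α} (hM : IsUnit M) {y : n → α} (hy : M *ᵥ y = y) :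
    M⁻¹ *ᵥ y = y :=
  haveI := hM.invertible
  inv_mulVec_eq_vec hy.symm

end Steady

variable {m n : Type*} [Fintype m] [Fintype n]

noncomputable def mulVecL : Matrix m n ℝ →L[ℝ] (n → ℝ) →L[ℝ] (m → ℝ) :=
  LinearMap.toContinuousLinearMap
    ((LinearMap.toContinuousLinearMap : ((n → ℝ) →ₗ[ℝ] (m → ℝ)) ≃ₗ[ℝ] _).toLinearMap ∘ₗ
      mulVecBilin ℝ ℝ)

@[simp] lemma mulVecL_apply (M : Matrix m n ℝ) (v : n → ℝ) : mulVecL M v = M *ᵥ v := rfl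

noncomputable def diagonalL [DecidableEq n] : (n → ℝ) →L[ℝ] Matrix n n ℝ :=
  LinearMap.toContinuousLinearMap (diagonalLinearMap n ℝ ℝ)

end Matrix

noncomputable def patankarWeight (a b s x u : ℝ) : ℝ := (a * x + b * u) * u ^ (-s) * x ^ (s - 1)

theorem patankarWeight_self (a b s : ℝ) {x : ℝ} (hx : 0 < x) :
    patankarWeight a b s x x = a + b := by
  rw [patankarWeight, mul_assoc, ← Real.rpow_add hx, show -s + (s - 1) = -1 by ring,
    Real.rpow_neg_one]
  field_simp

section Calculus

variable {m n E : Type*} [Fintype m] [Fintype n] [NormedAddCommGroup E] [NormedSpace ℝ E]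
  {x : E}

theorem HasFDerivAt.mulVec {M : E → Matrix m n ℝ} {v : E → n → ℝ}
    {M' : E →L[ℝ] Matrix m n ℝ} {v' : E →L[ℝ] n → ℝ}
    (hM : HasFDerivAt M M' x) (hv : HasFDerivAt v v' x) :
    HasFDerivAt (fun y => M y *ᵥ v y) (mulVecL (M x) ∘L v' + (mulVecL ∘L M').flip (v x)) x :=
  HasFDerivAt.clm_apply (c := fun y => mulVecL (M y)) (mulVecL.hasFDerivAt.comp x hM) hv

theorem HasFDerivAt.patankarWeight (a b s : ℝ) {f u : E → ℝ} {f' u' : E →L[ℝ] ℝ}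
    (hf : HasFDerivAt f f' x) (hu : HasFDerivAt u u' x) (hfu : u x = f x) (hpos : 0 < f x) :
    HasFDerivAt (fun y => _root_.patankarWeight a b s (f y) (u y))
      ((f x)⁻¹ • ((a + (s - 1) * (a + b)) • f' + (b - s * (a + b)) • u')) x := by
  have hlin := (hf.const_mul a).add (hu.const_mul b)
  have hu_pow :=
    (Real.hasDerivAt_rpow_const (p := -s) (Or.inl (hfu ▸ hpos.ne'))).comp_hasFDerivAt x hu
  have hf_pow := (Real.hasDerivAt_rpow_const (p := s - 1) (Or.inl hpos.ne')).comp_hasFDerivAt x hf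
  refine ((hlin.mul hu_pow).mul hf_pow).congr_fderiv ?_
  ext h
  simp only [Pi.mul_apply, Pi.add_apply, Function.comp_apply, _root_.add_apply,
    _root_.smul_apply, smul_eq_mul, hfu]
  set p := f x
  have e1 : p ^ (-s) = (p ^ s)⁻¹ := Real.rpow_neg hpos.le s
  have e2 : p ^ (s - 1) = p ^ s / p := by rw [Real.rpow_sub hpos, Real.rpow_one]
  have e3 : p ^ (s - 1 - 1) = p ^ s / p / p := by rw [Real.rpow_sub hpos, e2, Real.rpow_one]
  have e4 : p ^ (-s - 1) = (p ^ s)⁻¹ / p := by rw [Real.rpow_sub hpos, Real.rpow_one, e1]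
  rw [e1, e2, e3, e4]
  field_simp
  ring

variable [DecidableEq n]

theorem hasFDerivAt_patankarWeight_mulVec (a b s : ℝ) {P : Matrix n n ℝ} {y : n → ℝ}
    (hPy : P *ᵥ y = y) (hy : ∀ i, 0 < y i) :
    HasFDerivAt (fun z i => patankarWeight a b s (z i) ((P *ᵥ z) i))
      (mulVecL (diagonal y⁻¹ * ((a + (s - 1) * (a + b)) • 1 + (b - s * (a + b)) • P))) y := by
  refine hasFDerivAt_pi'.2 fun i => ?_
  have hPi := (hasFDerivAt_apply i (P *ᵥ y)).comp y (mulVecL P).hasFDerivAt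
  refine ((hasFDerivAt_apply i y).patankarWeight a b s hPi (congrFun hPy i) (hy i)).congr_fderiv ?_
  ext h
  simp only [smul_add, _root_.add_apply, _root_.smul_apply, ContinuousLinearMap.proj_apply,
    smul_eq_mul, ContinuousLinearMap.comp_apply, mulVecL_apply, ← mulVec_mulVec, add_mulVec,
    smul_mulVec, one_mulVec, mulVec_diagonal, Pi.inv_apply, Pi.add_apply, Pi.smul_apply]
  ring

theorem HasFDerivAt.matrix_inv {M : E → Matrix n n ℝ} {M' : E →L[ℝ] Matrix n n ℝ}
    (hM : HasFDerivAt M M' x) (hx : IsUnit (M x)) :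
    HasFDerivAt (fun y => (M y)⁻¹)
      (-ContinuousLinearMap.mulLeftRight ℝ _ (M x)⁻¹ (M x)⁻¹ ∘L M') x := by
  simp_rw [nonsing_inv_eq_ringInverse]
  have hinv := hasFDerivAt_ringInverse (𝕜 := ℝ) hx.unit
  rw [IsUnit.unit_spec, ← Ring.inverse_unit, IsUnit.unit_spec] at hinv
  exact hinv.comp x hM

theorem HasFDerivAt.inv_mulVec {M : E → Matrix n n ℝ} {v : E → n → ℝ}
    {M' : E →L[ℝ] Matrix n n ℝ} {v' : E →L[ℝ] n → ℝ}
    (hM : HasFDerivAt M M' x) (hv : HasFDerivAt v v' x) (hx : IsUnit (M x)) :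
    HasFDerivAt (fun y => (M y)⁻¹ *ᵥ v y)
      (mulVecL (M x)⁻¹ ∘L (v' - (mulVecL ∘L M').flip ((M x)⁻¹ *ᵥ v x))) x := by
  refine ((hM.matrix_inv hx).mulVec hv).congr_fderiv ?_
  ext1 h
  -- `M'` carries the product topology of `Matrix`, `mulLeftRight` the `linftyOp` one; they agree
  -- only up to unfolding, so the composite is evaluated by `change` rather than `simp`.
  change (M x)⁻¹ *ᵥ v' h + (-((M x)⁻¹ * M' h * (M x)⁻¹)) *ᵥ v x =
    (M x)⁻¹ *ᵥ (v' h - M' h *ᵥ ((M x)⁻¹ *ᵥ v x))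
  rw [neg_mulVec, mulVec_sub, mulVec_mulVec, mulVec_mulVec, Matrix.mul_assoc, sub_eq_add_neg]

end Calculus

theorem hasFDerivAt_patankarStep_of_steady {n : Type*} [Fintype n] [DecidableEq n]
    (a b s Δt α : ℝ) {A P : Matrix n n ℝ} {y : n → ℝ} (hAy : A *ᵥ y = 0) (hPy : P *ᵥ y = y)
    (hy : ∀ i, 0 < y i) (hC : IsUnit (1 - ((a + b) * Δt) • A)) :
    HasFDerivAt
      (fun z => (1 - Δt • (A * diagonal fun i => patankarWeight a b s (z i) ((P *ᵥ z) i)))⁻¹ *ᵥ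
        ((1 - α) • z + α • (P *ᵥ z)))
      (mulVecL ((1 - ((a + b) * Δt) • A)⁻¹ *
        ((1 - α) • 1 + ((s - 1) * (a + b) + a) • (Δt • A) +
          (α • 1 + (-s * (a + b) + b) • (Δt • A)) * P))) y := by
  set w := fun z i => patankarWeight a b s (z i) ((P *ᵥ z) i)
  set K : Matrix n n ℝ := (a + (s - 1) * (a + b)) • 1 + (b - s * (a + b)) • P
  have hMy : 1 - Δt • (A * diagonal (w y)) = 1 - ((a + b) * Δt) • A := by
    have hwy : w y = fun _ => a + b := funext fun i => by
      simp only [w, hPy, patankarWeight_self _ _ _ (hy i)]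
    rw [hwy, ← smul_one_eq_diagonal, mul_smul_comm, mul_one, smul_smul, mul_comm]
  have hM : HasFDerivAt (fun z => 1 - Δt • (A * diagonal (w z)))
      (-(Δt • A • (diagonalL ∘L mulVecL (diagonal y⁻¹ * K)))) y :=
    (((diagonalL.hasFDerivAt.comp y
      (hasFDerivAt_patankarWeight_mulVec a b s hPy hy)).const_mul A).const_smul Δt).const_sub 1
  have hv : HasFDerivAt (fun z => (1 - α) • z + α • (P *ᵥ z))
      (mulVecL ((1 - α) • 1 + α • P)) y := by
    convert (mulVecL ((1 - α) • 1 + α • P)).hasFDerivAt using 1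
    funext z
    simp
  have hK : ∀ h, diagonal ((diagonal y⁻¹ * K) *ᵥ h) *ᵥ y = K *ᵥ h := fun h => funext fun i => by
    rw [mulVec_diagonal, ← mulVec_mulVec, mulVec_diagonal, Pi.inv_apply, mul_comm, ← mul_assoc,
      mul_inv_cancel₀ (hy i).ne', one_mul]
  have hCy := inv_mulVec_eq_self hC (one_sub_smul_mulVec_of_mulVec_eq_zero _ hAy)
  refine (hM.inv_mulVec hv (hMy ▸ hC)).congr_fderiv (ContinuousLinearMap.ext fun h => ?_)
  change (1 - Δt • (A * diagonal (w y)))⁻¹ *ᵥ (((1 - α) • 1 + α • P) *ᵥ h -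
    (-(Δt • (A * diagonal ((diagonal y⁻¹ * K) *ᵥ h)))) *ᵥ
      ((1 - Δt • (A * diagonal (w y)))⁻¹ *ᵥ ((1 - α) • y + α • (P *ᵥ y)))) = _
  rw [hMy, hPy, ← add_smul, sub_add_cancel, one_smul, hCy, neg_mulVec, smul_mulVec,
    ← mulVec_mulVec, hK, sub_neg_eq_add, mulVecL_apply, ← mulVec_mulVec]
  congr 1
  simp only [K, add_mulVec, smul_mulVec, one_mulVec, mulVec_add, mulVec_smul, ← mulVec_mulVec]
  module

theorem sspmprk2_jacobian_at_steady_state_general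
    (N : ℕ) (A : Matrix (Fin N) (Fin N) ℝ)
    (hspec : ∀ μ ∈ spectrum ℂ (A.map (Complex.ofReal)), μ.re ≤ 0)
    (Δt α β : ℝ) (hΔt : 0 < Δt)
    (hβ : 0 < β) (hcond : α * β + 1 / (2 * β) ≤ 1)
    (β20 β21 s : ℝ)
    (hβ20 : β20 = 1 - 1 / (2 * β) - α * β) (hβ21 : β21 = 1 / (2 * β))
    (y1 : (Fin N → ℝ) → (Fin N → ℝ))
    (hy1 : ∀ y, y1 y = (1 - (β * Δt) • A)⁻¹ *ᵥ y)
    (D : (Fin N → ℝ) → Matrix (Fin N) (Fin N) ℝ)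
    (hD : ∀ y, D y = diagonal (β20 • y + β21 • y1 y) *
        diagonal (fun i => (y1 y i) ^ (-s)) * diagonal (fun i => (y i) ^ (s - 1)))
    (g : (Fin N → ℝ) → (Fin N → ℝ))
    (hg : ∀ y, g y = (1 - Δt • (A * D y))⁻¹ *ᵥ ((1 - α) • y + α • y1 y))
    (ystar : Fin N → ℝ) (hpos : ∀ i, 0 < ystar i) (hker : A *ᵥ ystar = 0) :
    (fderiv ℝ g ystar).toLinearMap =
      ((1 - ((1 - α * β) * Δt) • A)⁻¹ *
        ((1 - α) • (1 : Matrix (Fin N) (Fin N) ℝ) +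
          ((s - 1) * (1 - α * β) + β20) • (Δt • A) +
          (α • (1 : Matrix (Fin N) (Fin N) ℝ) +
            (-s * (1 - α * β) + β21) • (Δt • A)) *
            (1 - (β * Δt) • A)⁻¹)).mulVecLin := by
  have hsum : β20 + β21 = 1 - α * β := by rw [hβ20, hβ21]; ring
  have hαβ : 0 < 1 - α * β := by
    have : 0 < 1 / (2 * β) := by positivity
    linarith
  have hB := isUnit_one_sub_smul_of_spectrum_re_nonpos hspec (mul_pos hβ hΔt)
  have hC := isUnit_one_sub_smul_of_spectrum_re_nonpos hspec (mul_pos hαβ hΔt)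
  have hg_eq : g = fun z => (1 - Δt • (A * diagonal fun i =>
      patankarWeight β20 β21 s (z i) (((1 - (β * Δt) • A)⁻¹ *ᵥ z) i)))⁻¹ *ᵥ
        ((1 - α) • z + α • ((1 - (β * Δt) • A)⁻¹ *ᵥ z)) := by
    funext z
    rw [hg, hD, hy1, diagonal_mul_diagonal, diagonal_mul_diagonal]
    rfl
  have hJ := hasFDerivAt_patankarStep_of_steady β20 β21 s Δt α hker
    (inv_mulVec_eq_self hB (one_sub_smul_mulVec_of_mulVec_eq_zero _ hker)) hpos (hsum ▸ hC)
  rw [hsum] at hJ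
  rw [hg_eq, hJ.fderiv]
  rfl

theorem sspmprk2_jacobian_at_steady_state
    (N : ℕ) (A : Matrix (Fin N) (Fin N) ℝ)
    (hspec : ∀ μ ∈ spectrum ℂ (A.map (Complex.ofReal)), μ.re ≤ 0)
    (hones : (fun _ : Fin N => (1 : ℝ)) ᵥ* A = 0)
    (Δt α β : ℝ) (hΔt : 0 < Δt)
    (hα0 : 0 ≤ α) (hα1 : α ≤ 1) (hβ : 0 < β) (hcond : α * β + 1 / (2 * β) ≤ 1)
    (β20 β21 s : ℝ)
    (hβ20 : β20 = 1 - 1 / (2 * β) - α * β) (hβ21 : β21 = 1 / (2 * β))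
    (hs : s = (1 - α * β + α * β ^ 2) / (β * (1 - α * β)))
    (y1 : (Fin N → ℝ) → (Fin N → ℝ))
    (hy1 : ∀ y, y1 y = (1 - (β * Δt) • A)⁻¹ *ᵥ y)
    (D : (Fin N → ℝ) → Matrix (Fin N) (Fin N) ℝ)
    (hD : ∀ y, D y = diagonal (β20 • y + β21 • y1 y) *
        diagonal (fun i => (y1 y i) ^ (-s)) * diagonal (fun i => (y i) ^ (s - 1)))
    (g : (Fin N → ℝ) → (Fin N → ℝ))
    (hg : ∀ y, g y = (1 - Δt • (A * D y))⁻¹ *ᵥ ((1 - α) • y + α • y1 y))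
    (ystar : Fin N → ℝ) (hpos : ∀ i, 0 < ystar i) (hker : A *ᵥ ystar = 0) :
    (fderiv ℝ g ystar).toLinearMap =
      ((1 - ((1 - α * β) * Δt) • A)⁻¹ *
        ((1 - α) • (1 : Matrix (Fin N) (Fin N) ℝ) +
          ((s - 1) * (1 - α * β) + β20) • (Δt • A) +
          (α • (1 : Matrix (Fin N) (Fin N) ℝ) +
            (-s * (1 - α * β) + β21) • (Δt • A)) *
            (1 - (β * Δt) • A)⁻¹)).mulVecLin :=
  sspmprk2_jacobian_at_steady_state_general N A hspec Δt α β hΔt hβ hcond β20 β21 s hβ20 hβ21 y1 hy1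
    D hD g hg ystar hpos hker
end
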